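/- For any row contraction T on a Hilbert space H, the closed linear span over z ∈ 𝔹^d of the ranges of (I - Tz*)^{-1} equals the closed linear span over multi-indices n ∈ ℕ^d of the ranges of the symmetrized monomials T^n := Σ_{|α| words with letter count n} T^α. -/

import Mathlib

open ContinuousLinearMap

set_option synthInstance.maxHeartbeats 1000000
set_option maxHeartbeats 1000000

noncomputable section

instance piLpComplete {d : ℕ} {H : Type*} [NormedAddCommGroup H]
    [InnerProductSpace ℂ H] [CompleteSpace H] :
    CompleteSpace (PiLp 2 fun _ : Fin d => H) :=
  inferInstance

/-- The row operator `z : H^d → H`, `(h₁,...,h_d) ↦ Σ zⱼ hⱼ`, for a scalar row `z ∈ ℂ^d`. -/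
def rowOp {d : ℕ} {H : Type*} [NormedAddCommGroup H] [InnerProductSpace ℂ H]
    (z : EuclideanSpace ℂ (Fin d)) : PiLp 2 (fun _ : Fin d => H) →L[ℂ] H :=
  ∑ j, z j • ((ContinuousLinearMap.proj j : (∀ _ : Fin d, H) →L[ℂ] H).comp
    (PiLp.continuousLinearEquiv 2 ℂ (fun _ : Fin d => H)).toContinuousLinearMap)

/-- The column operator `z* : H → H^d`, `h ↦ (z̄₁ h, ..., z̄_d h)`; the adjoint of `rowOp z`. -/
def colOp {d : ℕ} {H : Type*} [NormedAddCommGroup H] [InnerProductSpace ℂ H]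
    (z : EuclideanSpace ℂ (Fin d)) : H →L[ℂ] PiLp 2 (fun _ : Fin d => H) :=
  ((PiLp.continuousLinearEquiv 2 ℂ (fun _ : Fin d => H)).symm.toContinuousLinearMap).comp
    (ContinuousLinearMap.pi fun j => (starRingEnd ℂ (z j)) • ContinuousLinearMap.id ℂ H)

/-- Ampliation `A ⊗ I_d` of an operator `A : H → J` acting componentwise on columns. -/
def liftD {d : ℕ} {H J : Type*} [NormedAddCommGroup H] [InnerProductSpace ℂ H]
    [NormedAddCommGroup J] [InnerProductSpace ℂ J] (A : H →L[ℂ] J) :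
    PiLp 2 (fun _ : Fin d => H) →L[ℂ] PiLp 2 (fun _ : Fin d => J) :=
  ((PiLp.continuousLinearEquiv 2 ℂ (fun _ : Fin d => J)).symm.toContinuousLinearMap).comp <|
    (ContinuousLinearMap.pi fun j =>
      A.comp ((ContinuousLinearMap.proj j : (∀ _ : Fin d, H) →L[ℂ] H))).comp
    (PiLp.continuousLinearEquiv 2 ℂ (fun _ : Fin d => H)).toContinuousLinearMap

open scoped Classical in
/-- The symmetrized monomial `T^n = Σ_{α : words with letter count n} T^α` of a row contraction. -/
def symPow {d : ℕ} {H : Type*} [NormedAddCommGroup H] [InnerProductSpace ℂ H]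
    [CompleteSpace H] (T : PiLp 2 (fun _ : Fin d => H) →L[ℂ] H) (n : Fin d → ℕ) :
    H →L[ℂ] H :=
  ∑ w ∈ Finset.univ.filter
      (fun w : Fin (∑ k, n k) → Fin d => ∀ k, (List.ofFn w).count k = n k),
    (List.ofFn fun j => T ∘L colOp (EuclideanSpace.single (w j) (1 : ℂ))).prod

/-!
By the Neumann series, `(1 - Tz*)⁻¹ = ∑ₖ (Tz*)ᵏ`, and expanding the noncommutative power gives
`(Tz*)ᵏ = ∑_{|n| = k} z̄ⁿ Tⁿ`; this proves `⊆`. Conversely, let `y` be orthogonal to every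
`(1 - Tz*)⁻¹ x` with `x ∈ S`. Since `T(s̄z)* = s Tz*`, the one-variable power series
`∑ₖ sᵏ ⟪y, (Tz*)ᵏ x⟫` vanishes near `s = 0`, so `⟪y, (Tz*)ᵏ x⟫ = ∑_{|n| = k} z̄ⁿ ⟪y, Tⁿ x⟫ = 0`
for every `z ∈ ℂᵈ`, not only in the ball. A polynomial vanishing on `ℂᵈ` has zero coefficients,
so `y ⊥ Tⁿ x`, and `⊇` follows because a closed subspace is its own double orthogonal complement.
-/

open Finset Filter Topology

section NoncommMultinomial

variable {ι R : Type*} [Fintype ι] [Semiring R]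

theorem sum_pow_eq_sum_prod_ofFn (f : ι → R) (k : ℕ) :
    (∑ i, f i) ^ k = ∑ w : Fin k → ι, (List.ofFn (f ∘ w)).prod := by
  induction k with
  | zero => simp
  | succ k ih =>
    rw [pow_succ', ih, sum_mul_sum, ← Fintype.sum_prod_type',
      ← (Fin.consEquiv fun _ => ι).sum_comp]
    refine Fintype.sum_congr _ _ fun ⟨i, w⟩ => ?_
    simp [List.ofFn_succ, Function.comp_def]

theorem List.prod_ofFn_smul {𝕜 : Type*} [CommSemiring 𝕜] [Algebra 𝕜 R] {k : ℕ}
    (c : Fin k → 𝕜) (B : Fin k → R) :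
    (List.ofFn fun i => c i • B i).prod = (∏ i, c i) • (List.ofFn B).prod := by
  induction k with
  | zero => simp
  | succ k ih =>
    simp only [List.ofFn_succ, List.prod_cons, ih, Fin.prod_univ_succ, smul_mul_smul_comm]

end NoncommMultinomial

theorem Fintype.prod_comp_eq_prod_pow_count {ι M : Type*} [Fintype ι] [DecidableEq ι]
    [CommMonoid M] {k : ℕ} (f : ι → M) (w : Fin k → ι) :
    ∏ i, f (w i) = ∏ j, f j ^ (List.ofFn w).count j := by
  rw [← List.prod_ofFn, ← Function.comp_def f w, ← List.map_ofFn, Finset.prod_list_map_count]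
  refine Finset.prod_subset (subset_univ _) fun j _ hj => ?_
  rw [List.count_eq_zero_of_not_mem (mt List.mem_toFinset.2 hj), pow_zero]

theorem Fintype.sum_count_ofFn {ι : Type*} [Fintype ι] [DecidableEq ι] {k : ℕ} (w : Fin k → ι) :
    ∑ j, (List.ofFn w).count j = k := by
  simpa using Multiset.sum_count_eq_card (s := univ) (m := (List.ofFn w : Multiset ι))
    (by simp)

theorem eq_zero_of_eventually_hasSum_pow_smul_zero {𝕜 E : Type*} [NontriviallyNormedField 𝕜]
    [NormedAddCommGroup E] [NormedSpace 𝕜 E] {a : ℕ → E}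
    (h : ∀ᶠ s in 𝓝 (0 : 𝕜), HasSum (fun m => s ^ m • a m) 0) (m : ℕ) : a m = 0 := by
  let p : FormalMultilinearSeries 𝕜 𝕜 E := fun m => ContinuousMultilinearMap.mkPiRing 𝕜 (Fin m) (a m)
  have hp : HasFPowerSeriesAt 0 p 0 :=
    hasFPowerSeriesAt_iff.2 (by simpa [p, FormalMultilinearSeries.coeff] using h)
  simpa [p, FormalMultilinearSeries.coeff] using congrArg (fun q => q.coeff m) hp.eq_zero

theorem eq_zero_of_forall_sum_mul_prod_pow_eq_zero {R σ : Type*} [CommRing R] [IsDomain R]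
    [Infinite R] [Fintype σ] {s : Finset (σ → ℕ)} {c : (σ → ℕ) → R}
    (h : ∀ w : σ → R, ∑ n ∈ s, c n * ∏ i, w i ^ n i = 0) {n : σ → ℕ} (hn : n ∈ s) :
    c n = 0 := by
  classical
  let p : MvPolynomial σ R :=
    ∑ m ∈ s, MvPolynomial.monomial (Finsupp.equivFunOnFinite.symm m) (c m)
  have hp : p = 0 := MvPolynomial.funext fun w => by
    simp [p, MvPolynomial.eval_monomial, Finsupp.prod_fintype, h]
  simpa [p, MvPolynomial.coeff_sum, MvPolynomial.coeff_monomial, hn] using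
    congrArg (MvPolynomial.coeff (Finsupp.equivFunOnFinite.symm n)) hp

section ColOp

variable {d : ℕ} {H : Type*} [NormedAddCommGroup H] [InnerProductSpace ℂ H]

@[simp]
theorem colOp_apply (z : EuclideanSpace ℂ (Fin d)) (x : H) (c : Fin d) :
    colOp z x c = starRingEnd ℂ (z c) • x :=
  rfl

theorem norm_colOp_apply (z : EuclideanSpace ℂ (Fin d)) (x : H) :
    ‖colOp z x‖ = ‖z‖ * ‖x‖ := by
  rw [PiLp.norm_eq_of_L2, EuclideanSpace.norm_eq, ← Real.sqrt_sq (norm_nonneg x),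
    ← Real.sqrt_mul (by positivity), Finset.sum_mul]
  simp [norm_smul, mul_pow]

theorem norm_comp_colOp_le {T : PiLp 2 (fun _ : Fin d => H) →L[ℂ] H} (hT : ‖T‖ ≤ 1)
    (z : EuclideanSpace ℂ (Fin d)) : ‖T ∘L colOp z‖ ≤ ‖z‖ :=
  opNorm_le_bound _ (norm_nonneg z) fun x =>
    calc ‖T (colOp z x)‖ ≤ 1 * ‖colOp z x‖ := T.le_of_opNorm_le hT _
      _ = ‖z‖ * ‖x‖ := by rw [one_mul, norm_colOp_apply]

theorem colOp_smul (a : ℂ) (z : EuclideanSpace ℂ (Fin d)) :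
    (colOp (a • z) : H →L[ℂ] _) = starRingEnd ℂ a • colOp z := by
  ext x c
  simp [mul_smul]

theorem colOp_eq_sum (z : EuclideanSpace ℂ (Fin d)) :
    (colOp z : H →L[ℂ] _) = ∑ j, starRingEnd ℂ (z j) • colOp (EuclideanSpace.single j 1) := by
  ext x c
  simp

end ColOp

section RowContraction

open Finset.Nat
open scoped InnerProductSpace

variable {d : ℕ} {H : Type*} [NormedAddCommGroup H] [InnerProductSpace ℂ H] [CompleteSpace H]
  (T : PiLp 2 (fun _ : Fin d => H) →L[ℂ] H)

theorem symPow_eq_sum_of_sum_eq {n : Fin d → ℕ} {k : ℕ} (hk : ∑ c, n c = k) :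
    symPow T n = ∑ w ∈ univ.filter (fun w : Fin k → Fin d => ∀ c, (List.ofFn w).count c = n c),
      (List.ofFn fun j => T ∘L colOp (EuclideanSpace.single (w j) (1 : ℂ))).prod := by
  subst hk
  rfl

theorem pow_comp_colOp (z : EuclideanSpace ℂ (Fin d)) (k : ℕ) :
    (T ∘L colOp z) ^ k =
      ∑ n ∈ antidiagonalTuple d k, (∏ c, starRingEnd ℂ (z c) ^ n c) • symPow T n := by
  rw [colOp_eq_sum, comp_finsetSum, sum_pow_eq_sum_prod_ofFn,
    ← sum_fiberwise_of_maps_to (g := fun w c => (List.ofFn w).count c)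
      (t := antidiagonalTuple d k) fun w _ => mem_antidiagonalTuple.2 (Fintype.sum_count_ofFn w)]
  refine sum_congr rfl fun n hn => ?_
  rw [symPow_eq_sum_of_sum_eq T (mem_antidiagonalTuple.1 hn), smul_sum]
  refine sum_congr (filter_congr fun w _ => funext_iff) fun w hw => ?_
  simp only [Function.comp_def, comp_smul, List.prod_ofFn_smul,
    Fintype.prod_comp_eq_prod_pow_count (fun c => starRingEnd ℂ (z c)) w, (mem_filter.1 hw).2]

theorem resolvent_apply_mem_closure (hT : ‖T‖ ≤ 1) (S : Submodule ℂ H)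
    {z : EuclideanSpace ℂ (Fin d)} (hz : ‖z‖ < 1) {x : H} (hx : x ∈ S) :
    Ring.inverse (1 - T ∘L colOp z) x ∈
      (⨆ n : Fin d → ℕ, S.map ((symPow T n : H →L[ℂ] H) : H →ₗ[ℂ] H)).topologicalClosure := by
  have hsum := (hasSum_geom_series_inverse _ ((norm_comp_colOp_le hT z).trans_lt hz)).mapL
    (apply ℂ H x)
  refine mem_closure_of_tendsto hsum (Eventually.of_forall fun t => sum_mem fun k _ => ?_)
  rw [apply_apply, pow_comp_colOp, _root_.sum_apply]
  exact sum_mem fun n _ =>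
    Submodule.smul_mem _ _ (Submodule.mem_iSup_of_mem n (Submodule.mem_map_of_mem hx))

theorem inner_pow_comp_colOp_eq_zero (hT : ‖T‖ ≤ 1) {x y : H}
    (h : ∀ z : EuclideanSpace ℂ (Fin d), ‖z‖ < 1 → ⟪y, Ring.inverse (1 - T ∘L colOp z) x⟫_ℂ = 0)
    (z : EuclideanSpace ℂ (Fin d)) (k : ℕ) : ⟪y, ((T ∘L colOp z) ^ k) x⟫_ℂ = 0 := by
  refine eq_zero_of_eventually_hasSum_pow_smul_zero (𝕜 := ℂ)
    (a := fun k => ⟪y, ((T ∘L colOp z) ^ k) x⟫_ℂ) ?_ k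
  have hsmall : ∀ᶠ s in 𝓝 (0 : ℂ), ‖s‖ * ‖z‖ < 1 :=
    ((continuous_norm.mul continuous_const : Continuous fun s : ℂ => ‖s‖ * ‖z‖).tendsto' 0 0
      (by simp)).eventually (gt_mem_nhds one_pos)
  filter_upwards [hsmall] with s hs
  have hz : ‖starRingEnd ℂ s • z‖ < 1 := by rwa [norm_smul, RCLike.norm_conj]
  have hsum := ((hasSum_geom_series_inverse _ ((norm_comp_colOp_le hT _).trans_lt hz)).mapL
    (apply ℂ H x)).mapL (innerSL ℂ y)
  have h0 := h _ hz
  rw [colOp_smul, Complex.conj_conj, comp_smul] at h0 hsum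
  simpa [h0, smul_pow, inner_smul_right] using hsum

theorem inner_symPow_eq_zero {x y : H}
    (h : ∀ z k, ⟪y, ((T ∘L colOp z) ^ k) x⟫_ℂ = 0) (n : Fin d → ℕ) :
    ⟪y, symPow T n x⟫_ℂ = 0 := by
  refine eq_zero_of_forall_sum_mul_prod_pow_eq_zero (c := fun m => ⟪y, symPow T m x⟫_ℂ)
    (fun w => ?_) (mem_antidiagonalTuple.2 rfl)
  have := h (WithLp.toLp 2 fun c => starRingEnd ℂ (w c)) (∑ c, n c)
  rw [pow_comp_colOp, _root_.sum_apply, inner_sum] at this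
  simpa [inner_smul_right, mul_comm] using this

end RowContraction

theorem stmt_7 {d : ℕ} {H : Type*} [NormedAddCommGroup H] [InnerProductSpace ℂ H]
    [CompleteSpace H]
    (T : PiLp 2 (fun _ : Fin d => H) →L[ℂ] H) (hT : ‖T‖ ≤ 1)
    (S : Submodule ℂ H) :
    (⨆ z : {z : EuclideanSpace ℂ (Fin d) // ‖z‖ < 1},
        Submodule.map ((Ring.inverse (1 - T ∘L colOp z.1) : H →L[ℂ] H) : H →ₗ[ℂ] H) S).topologicalClosure
    = (⨆ n : Fin d → ℕ,
        Submodule.map ((symPow T n : H →L[ℂ] H) : H →ₗ[ℂ] H) S).topologicalClosure := by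
  apply le_antisymm
  · refine Submodule.topologicalClosure_minimal _ (iSup_le fun z => ?_)
      (Submodule.isClosed_topologicalClosure _)
    rintro _ ⟨x, hx, rfl⟩
    exact resolvent_apply_mem_closure T hT S z.2 hx
  · refine Submodule.topologicalClosure_minimal _ (iSup_le fun n => ?_)
      (Submodule.isClosed_topologicalClosure _)
    rintro _ ⟨x, hx, rfl⟩
    rw [← Submodule.orthogonal_orthogonal_eq_closure]
    refine fun y hy => inner_symPow_eq_zero T
      (inner_pow_comp_colOp_eq_zero T hT fun z hz => ?_) n
    exact Submodule.inner_left_of_mem_orthogonal (Submodule.mem_iSup_of_mem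
      (⟨z, hz⟩ : {z : EuclideanSpace ℂ (Fin d) // ‖z‖ < 1}) (Submodule.mem_map_of_mem hx)) hy

end
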